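/- Let t : X → [0,∞] be measurable on a probability space with ∫ t dμ < ∞. Suppose f_n ≤ t pointwise with ∫(t − f_n) dμ < 2^{-2n}, and the c_n satisfy 2^{-n} < c_n < 2^{-(n−1)}. Define h^m_n = min{f_n, f_{n−1} + c_{n−1}, …, f_m + c_m} for n > m and h_m = sup_{n>m} h^m_n. Then for all x and n > m, |h_m(x) − h^m_n(x)| ≤ c_n, and h_m ≤ t pointwise. -/

import Mathlib

open MeasureTheory ENNReal

noncomputable def hmn {X : Type*} (f : ℕ → X → ℝ) (c : ℕ → ℝ) (m n : ℕ) (x : X) : ℝ :=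
  (Finset.Ico m n).fold min (f n x) (fun k => f k x + c k)

noncomputable def hm {X : Type*} (f : ℕ → X → ℝ) (c : ℕ → ℝ) (m : ℕ) (x : X) : ℝ :=
  ⨆ n : ℕ, hmn f c m (m + 1 + n) x

section aux

variable {X : Type*} (f : ℕ → X → ℝ) (c : ℕ → ℝ)

lemma hmn_le_f (m n : ℕ) (x : X) : hmn f c m n x ≤ f n x :=
  (Finset.fold_min_le _).2 (Or.inl le_rfl)

lemma hmn_le_term {m n k : ℕ} (hk : k ∈ Finset.Ico m n) (x : X) :
    hmn f c m n x ≤ f k x + c k :=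
  (Finset.fold_min_le _).2 (Or.inr ⟨k, hk, le_rfl⟩)

lemma hmn_mono (hc0 : ∀ k, 0 ≤ c k) (hmono : ∀ x, Monotone fun n => f n x)
    {m n n' : ℕ} (hn' : n ≤ n') (x : X) :
    hmn f c m n x ≤ hmn f c m n' x := by
  refine (Finset.le_fold_min _).2 ⟨(hmn_le_f f c m n x).trans (hmono x hn'), fun k hk => ?_⟩
  rcases lt_or_ge k n with h | h
  · exact hmn_le_term f c (Finset.mem_Ico.2 ⟨(Finset.mem_Ico.1 hk).1, h⟩) x
  · exact le_add_of_le_of_nonneg ((hmn_le_f f c m n x).trans (hmono x h)) (hc0 k)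

lemma hmn_le_hmn_add (hc0 : ∀ k, 0 ≤ c k) (hmono : ∀ x, Monotone fun n => f n x)
    {m n n' : ℕ} (hn : m < n) (hn' : n ≤ n') (x : X) :
    hmn f c m n' x ≤ hmn f c m n x + c n := by
  rcases (Finset.fold_min_le _).1 (le_refl (hmn f c m n x)) with h | ⟨k, hk, hk'⟩
  · rcases eq_or_lt_of_le hn' with rfl | hlt
    · exact le_add_of_le_of_nonneg le_rfl (hc0 n)
    · calc hmn f c m n' x ≤ f n x + c n :=
            hmn_le_term f c (Finset.mem_Ico.2 ⟨hn.le, hlt⟩) x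
        _ ≤ hmn f c m n x + c n := by linarith
  · calc hmn f c m n' x ≤ f k x + c k := by
          refine hmn_le_term f c ?_ x
          rw [Finset.mem_Ico] at hk ⊢
          exact ⟨hk.1, hk.2.trans_le hn'⟩
      _ ≤ hmn f c m n x + c n := le_add_of_le_of_nonneg hk' (hc0 n)

lemma hm_bdd (hc0 : ∀ k, 0 ≤ c k) (hmono : ∀ x, Monotone fun n => f n x) (m : ℕ) (x : X) :
    BddAbove (Set.range fun j => hmn f c m (m + 1 + j) x) := by
  refine ⟨hmn f c m (m + 1) x + c (m + 1), ?_⟩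
  rintro y ⟨j, rfl⟩
  exact hmn_le_hmn_add f c hc0 hmono (Nat.lt_succ_self m) (by omega) x

lemma hmn_le_hm (hc0 : ∀ k, 0 ≤ c k) (hmono : ∀ x, Monotone fun n => f n x)
    {m n : ℕ} (hn : m < n) (x : X) : hmn f c m n x ≤ hm f c m x := by
  have : hmn f c m n x = hmn f c m (m + 1 + (n - m - 1)) x := by
    congr 1; omega
  rw [this]
  exact le_ciSup (hm_bdd f c hc0 hmono m x) (n - m - 1)

lemma hm_le (hc0 : ∀ k, 0 ≤ c k) (hmono : ∀ x, Monotone fun n => f n x)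
    {m n : ℕ} (hn : m < n) (x : X) : hm f c m x ≤ hmn f c m n x + c n := by
  refine ciSup_le fun j => ?_
  rcases le_or_gt (m + 1 + j) n with h | h
  · exact le_add_of_le_of_nonneg (hmn_mono f c hc0 hmono h x) (hc0 n)
  · exact hmn_le_hmn_add f c hc0 hmono hn h.le x

end aux

theorem hm_approx {X : Type*} [MeasurableSpace X] (μ : Measure X) [IsProbabilityMeasure μ]
    (t : X → ℝ≥0∞) (ht : Measurable t) (hfin : ∫⁻ x, t x ∂μ < ⊤)
    (f : ℕ → X → ℝ) (hf : ∀ n, Measurable (f n))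
    (hf0 : ∀ n x, 0 ≤ f n x)
    (hmono : ∀ x, Monotone fun n => f n x)
    (hfle : ∀ n x, ENNReal.ofReal (f n x) ≤ t x)
    (hgap : ∀ n : ℕ, ∫⁻ x, (t x - ENNReal.ofReal (f n x)) ∂μ < 2 ^ (-(2 * n : ℤ)))
    (c : ℕ → ℝ) (hc : ∀ n : ℕ, (2 : ℝ) ^ (-(n : ℤ)) < c n ∧ c n < 2 ^ (-(n : ℤ) + 1)) :
    (∀ m, ∀ x, ∀ n, m < n → |hm f c m x - hmn f c m n x| ≤ c n) ∧
      ∀ m x, ENNReal.ofReal (hm f c m x) ≤ t x := by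
  have hc0 : ∀ k, 0 ≤ c k := fun k =>
    le_of_lt ((zpow_pos (by norm_num : (0:ℝ) < 2) _).trans (hc k).1)
  constructor
  · intro m x n hn
    have h1 := hmn_le_hm f c hc0 hmono hn x
    have h2 := hm_le f c hc0 hmono hn x
    rw [abs_le]
    constructor <;> linarith
  · intro m x
    refine ENNReal.le_of_forall_pos_le_add fun ε hε _ => ?_
    -- choose n > m with c n ≤ ε
    obtain ⟨n, hnm, hcn⟩ : ∃ n, m < n ∧ c n ≤ (ε : ℝ) := by
      obtain ⟨k, hk⟩ := exists_pow_lt_of_lt_one (by positivity : (0:ℝ) < ε / 2)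
        (by norm_num : (1:ℝ) / 2 < 1)
      set N : ℕ := max (m + 1) k with hN
      refine ⟨N, by omega, ?_⟩
      have h1 : c N < 2 ^ (-(N : ℤ) + 1) := (hc _).2
      have h2 : (2 : ℝ) ^ (-(N : ℤ) + 1) ≤ 2 ^ (-(k : ℤ) + 1) := by
        apply zpow_le_zpow_right₀ (by norm_num : (1:ℝ) ≤ 2)
        have : k ≤ N := le_max_right _ _
        omega
      have h3 : (2 : ℝ) ^ (-(k : ℤ) + 1) = 2 * ((1:ℝ)/2) ^ k := by
        rw [one_div, inv_pow, ← zpow_natCast, ← zpow_neg, zpow_add₀ (by norm_num : (2:ℝ) ≠ 0)]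
        ring
      nlinarith [hk]
    have hhm : hm f c m x ≤ f n x + c n :=
      (hm_le f c hc0 hmono hnm x).trans
        (add_le_add_left (hmn_le_f f c m n x) _)
    calc ENNReal.ofReal (hm f c m x) ≤ ENNReal.ofReal (f n x + c n) :=
          ENNReal.ofReal_le_ofReal hhm
      _ ≤ ENNReal.ofReal (f n x) + ENNReal.ofReal (c n) := ENNReal.ofReal_add_le
      _ ≤ t x + ε := by
          refine add_le_add (hfle n x) ?_
          rw [← ENNReal.ofReal_coe_nnreal]
          exact ENNReal.ofReal_le_ofReal hcn
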